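/- Let X_o = Σ_{j=1}^J c_j h_j a(τ_j)^H ∈ ℂ^{K×N} with ‖h_j‖₂ = 1, c_j ∈ ℂ nonzero, and distinct τ_j ∈ [0,1). Suppose there exists a vector-valued trigonometric polynomial q(τ) = Σ_{n=−2M}^{2M} λ(n) e^{i2πnτ} b_n ∈ ℂ^K with q(τ_j) = sign(c_j) h_j for all j and ‖q(τ)‖₂ < 1 for τ ∉ {τ_1,…,τ_J}. Then ⟨λ, y⟩_ℝ = Σ_j |c_j| ≥ ‖X_o‖_A, where y(n) = ⟨X_o, b_n e_n^H⟩, and consequently ‖X_o‖_A = Σ_j |c_j| and X_o is an optimal solution of the atomic norm minimization problem min ‖X‖_A subject to ⟨X, b_n e_n^H⟩ = y(n) for all n. -/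

import Mathlib

/-!
The measurement functional `X ↦ Σₙ conj λ(n) ⟨X, bₙ eₙᴴ⟩` is `X ↦ tr (Λᴴ X)` for
`Λ = B*(λ) = Σₙ λ(n) bₙ eₙᴴ`, and on an atom it evaluates to `tr (Λᴴ h a(τ)ᴴ) = ⟪q(τ), h⟫`, of
modulus at most `‖q(τ)‖ ≤ 1`. Hence `Re tr (Λᴴ X) ≤ Σ |c_k|` for every atomic decomposition of `X`,
that is `Re tr (Λᴴ X) ≤ ‖X‖_A`. On `X_o` the interpolation conditions `q(τ_j) = sign(c_j) h_j` make
`tr (Λᴴ X_o) = Σ |c_j|`, the cost of the given decomposition, so `‖X_o‖_A = Σ |c_j|`; and a feasible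
`X` has the same measurements, so the same lower bound applies to `‖X‖_A`.

Since `sInf ∅ = 0` in `ℝ`, the lower bound needs every matrix to have some atomic decomposition:
the steering vectors at `4M+1` distinct frequencies form a Vandermonde matrix up to a diagonal
factor, so the atoms `eᵢ a(θ_k)ᴴ` span all matrices.
-/

open Real Complex Matrix

noncomputable section

/-- The steering vector `a(τ) ∈ ℂ^N`, `N = 4M+1`, with entries `e^{i2πnτ}`, `n = −2M,…,2M`. -/
def aVec (M : ℕ) (τ : ℝ) : Fin (4 * M + 1) → ℂ :=
  fun n => Complex.exp (Complex.I * (2 * π * ((n : ℤ) - 2 * M) * τ))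

/-- The atom `h a(τ)ᴴ`. -/
def atomMat {K M : ℕ} (h : EuclideanSpace ℂ (Fin K)) (τ : ℝ) :
    Matrix (Fin K) (Fin (4 * M + 1)) ℂ :=
  Matrix.of fun i j => h i * star (aVec M τ j)

/-- The atomic norm `‖X‖_A = inf { Σ_k |c_k| : X = Σ_k c_k h_k a(τ_k)ᴴ, ‖h_k‖₂ = 1 }`. -/
def atomicNorm {K M : ℕ} (X : Matrix (Fin K) (Fin (4 * M + 1)) ℂ) : ℝ :=
  sInf {t : ℝ | ∃ (J : ℕ) (c : Fin J → ℂ) (h : Fin J → EuclideanSpace ℂ (Fin K))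
    (τ : Fin J → ℝ), (∀ k, ‖h k‖ = 1) ∧ (∀ k, τ k ∈ Set.Ico (0 : ℝ) 1) ∧
    X = ∑ k, c k • atomMat (h k) (τ k) ∧ t = ∑ k, ‖c k‖}

theorem injOn_exp_two_pi_I_mul :
    Set.InjOn (fun t : ℝ => Complex.exp (I * (2 * π * t))) (Set.Ico 0 1) := by
  intro s hs t ht hst
  have hcircle :
      AddCircle.toCircle (s : AddCircle (1 : ℝ)) = AddCircle.toCircle (t : AddCircle (1 : ℝ)) := by
    ext
    simpa [AddCircle.toCircle_apply_mk, Circle.coe_exp, mul_comm] using hst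
  have hs' : s ∈ Set.Ico 0 (0 + 1) := by simpa using hs
  have ht' : t ∈ Set.Ico 0 (0 + 1) := by simpa using ht
  exact (AddCircle.coe_eq_coe_iff_of_mem_Ico hs' ht').mp
    (AddCircle.injective_toCircle one_ne_zero hcircle)

theorem aVec_apply_eq_pow_div (M : ℕ) (τ : ℝ) (n : Fin (4 * M + 1)) :
    aVec M τ n =
      Complex.exp (I * (2 * π * τ)) ^ (n : ℕ) / Complex.exp (I * (2 * π * τ)) ^ (2 * M) := by
  rw [← Complex.exp_nat_mul, ← Complex.exp_nat_mul, ← Complex.exp_sub, aVec]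
  congr 1
  push_cast
  ring

def steeringMatrix (M : ℕ) (θ : Fin (4 * M + 1) → ℝ) :
    Matrix (Fin (4 * M + 1)) (Fin (4 * M + 1)) ℂ :=
  Matrix.of fun n k => aVec M (θ k) n

theorem det_steeringMatrix_ne_zero {M : ℕ} {θ : Fin (4 * M + 1) → ℝ}
    (hθ : ∀ k, θ k ∈ Set.Ico (0 : ℝ) 1) (hinj : Function.Injective θ) :
    (steeringMatrix M θ).det ≠ 0 := by
  set w : Fin (4 * M + 1) → ℂ := fun k => Complex.exp (I * (2 * π * θ k))
  have hw : Function.Injective w := fun k l hkl => hinj (injOn_exp_two_pi_I_mul (hθ k) (hθ l) hkl)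
  have hfactor : (steeringMatrix M θ)ᵀ = diagonal (fun k => (w k ^ (2 * M))⁻¹) * vandermonde w := by
    ext k n
    simp [steeringMatrix, aVec_apply_eq_pow_div, w, diagonal_mul, div_eq_inv_mul]
  rw [← det_transpose, hfactor, det_mul, det_diagonal]
  refine mul_ne_zero (Finset.prod_ne_zero_iff.mpr fun k _ => by simp [w, Complex.exp_ne_zero]) ?_
  exact det_vandermonde_ne_zero_iff.mpr hw

theorem exists_fin_atomic_decomposition_of_fintype {K M : ℕ} {ι : Type*} [Fintype ι]
    {X : Matrix (Fin K) (Fin (4 * M + 1)) ℂ} (c : ι → ℂ) (h : ι → EuclideanSpace ℂ (Fin K))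
    (τ : ι → ℝ) (hh : ∀ k, ‖h k‖ = 1) (hτ : ∀ k, τ k ∈ Set.Ico (0 : ℝ) 1)
    (hX : X = ∑ k, c k • atomMat (h k) (τ k)) :
    ∃ (J : ℕ) (c : Fin J → ℂ) (h : Fin J → EuclideanSpace ℂ (Fin K)) (τ : Fin J → ℝ),
      (∀ k, ‖h k‖ = 1) ∧ (∀ k, τ k ∈ Set.Ico (0 : ℝ) 1) ∧ X = ∑ k, c k • atomMat (h k) (τ k) :=
  let e := Fintype.equivFin ι
  ⟨_, c ∘ e.symm, h ∘ e.symm, τ ∘ e.symm, fun _ => hh _, fun _ => hτ _,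
    hX.trans (e.symm.sum_comp fun k => c k • atomMat (h k) (τ k)).symm⟩

theorem sum_smul_atomMat_single {K M : ℕ} (D : Matrix (Fin K) (Fin (4 * M + 1)) ℂ)
    (θ : Fin (4 * M + 1) → ℝ) :
    ∑ p : Fin K × Fin (4 * M + 1), D p.1 p.2 • atomMat (EuclideanSpace.single p.1 1) (θ p.2) =
      D * (steeringMatrix M θ)ᴴ := by
  ext i n
  simp [Matrix.sum_apply, Fintype.sum_prod_type, atomMat, steeringMatrix, mul_apply,
    PiLp.single_apply]

theorem exists_atomic_decomposition {K M : ℕ} (X : Matrix (Fin K) (Fin (4 * M + 1)) ℂ) :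
    ∃ (J : ℕ) (c : Fin J → ℂ) (h : Fin J → EuclideanSpace ℂ (Fin K)) (τ : Fin J → ℝ),
      (∀ k, ‖h k‖ = 1) ∧ (∀ k, τ k ∈ Set.Ico (0 : ℝ) 1) ∧ X = ∑ k, c k • atomMat (h k) (τ k) := by
  set θ : Fin (4 * M + 1) → ℝ := fun k => (k : ℝ) / (4 * M + 1)
  have hθ : ∀ k, θ k ∈ Set.Ico (0 : ℝ) 1 := fun k =>
    ⟨by positivity, (div_lt_one (by positivity)).mpr (by exact_mod_cast k.isLt)⟩
  have hinj : Function.Injective θ := fun k l hkl => by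
    simpa [θ, div_left_inj' (by positivity : (4 * M + 1 : ℝ) ≠ 0), Fin.val_inj] using hkl
  have hA : IsUnit (steeringMatrix M θ)ᴴ.det := by
    simpa [det_conjTranspose] using det_steeringMatrix_ne_zero hθ hinj
  refine exists_fin_atomic_decomposition_of_fintype (ι := Fin K × Fin (4 * M + 1))
    (fun p => (X * (steeringMatrix M θ)ᴴ⁻¹) p.1 p.2)
    (fun p => EuclideanSpace.single p.1 1) (fun p => θ p.2) (fun _ => by simp)
    (fun _ => hθ _) ?_
  rw [sum_smul_atomMat_single, Matrix.nonsing_inv_mul_cancel_right _ _ hA]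

theorem atomicNorm_le_sum_norm {K M J : ℕ} {X : Matrix (Fin K) (Fin (4 * M + 1)) ℂ}
    (c : Fin J → ℂ) (h : Fin J → EuclideanSpace ℂ (Fin K)) (τ : Fin J → ℝ)
    (hh : ∀ k, ‖h k‖ = 1) (hτ : ∀ k, τ k ∈ Set.Ico (0 : ℝ) 1)
    (hX : X = ∑ k, c k • atomMat (h k) (τ k)) :
    atomicNorm X ≤ ∑ k, ‖c k‖ :=
  csInf_le ⟨0, by rintro _ ⟨_, _, _, _, _, _, _, rfl⟩; positivity⟩ ⟨J, c, h, τ, hh, hτ, hX, rfl⟩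

theorem le_atomicNorm_of_forall_le {K M : ℕ} {X : Matrix (Fin K) (Fin (4 * M + 1)) ℂ} {r : ℝ}
    (hr : ∀ (J : ℕ) (c : Fin J → ℂ) (h : Fin J → EuclideanSpace ℂ (Fin K)) (τ : Fin J → ℝ),
      (∀ k, ‖h k‖ = 1) → (∀ k, τ k ∈ Set.Ico (0 : ℝ) 1) →
      X = ∑ k, c k • atomMat (h k) (τ k) → r ≤ ∑ k, ‖c k‖) :
    r ≤ atomicNorm X := by
  obtain ⟨J, c, h, τ, hh, hτ, hX⟩ := exists_atomic_decomposition X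
  refine le_csInf ⟨_, J, c, h, τ, hh, hτ, hX, rfl⟩ ?_
  rintro _ ⟨J, c, h, τ, hh, hτ, hX, rfl⟩
  exact hr J c h τ hh hτ hX

theorem trace_conjTranspose_mul_atomMat {K M : ℕ} (Λ : Matrix (Fin K) (Fin (4 * M + 1)) ℂ)
    (h : EuclideanSpace ℂ (Fin K)) (τ : ℝ) :
    trace (Λᴴ * atomMat h τ) = inner ℂ (WithLp.toLp 2 (Λ *ᵥ aVec M τ)) h := by
  simp only [trace, diag, mul_apply, conjTranspose_apply, atomMat, of_apply, PiLp.inner_apply,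
    RCLike.inner_apply, mulVec, dotProduct, map_sum, map_mul, Finset.mul_sum, starRingEnd_apply]
  rw [Finset.sum_comm]
  exact Finset.sum_congr rfl fun _ _ => Finset.sum_congr rfl fun _ _ => by ring

theorem trace_conjTranspose_mul_sum_atomMat {K M J : ℕ} (Λ : Matrix (Fin K) (Fin (4 * M + 1)) ℂ)
    (c : Fin J → ℂ) (h : Fin J → EuclideanSpace ℂ (Fin K)) (τ : Fin J → ℝ) :
    trace (Λᴴ * ∑ k, c k • atomMat (h k) (τ k)) =
      ∑ k, c k * inner ℂ (WithLp.toLp 2 (Λ *ᵥ aVec M (τ k))) (h k) := by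
  simp [Matrix.mul_sum, trace_sum, trace_conjTranspose_mul_atomMat]

theorem re_trace_conjTranspose_mul_le_atomicNorm {K M : ℕ}
    (Λ : Matrix (Fin K) (Fin (4 * M + 1)) ℂ)
    (hΛ : ∀ τ ∈ Set.Ico (0 : ℝ) 1, ‖WithLp.toLp 2 (Λ *ᵥ aVec M τ)‖ ≤ 1)
    (X : Matrix (Fin K) (Fin (4 * M + 1)) ℂ) :
    (trace (Λᴴ * X)).re ≤ atomicNorm X := by
  refine le_atomicNorm_of_forall_le fun J c h τ hh hτ hX => ?_
  rw [hX, trace_conjTranspose_mul_sum_atomMat, re_sum]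
  gcongr with k
  calc (c k * inner ℂ (WithLp.toLp 2 (Λ *ᵥ aVec M (τ k))) (h k)).re
      ≤ ‖c k‖ * ‖inner ℂ (WithLp.toLp 2 (Λ *ᵥ aVec M (τ k))) (h k)‖ :=
        (re_le_norm _).trans (norm_mul _ _).le
    _ ≤ ‖c k‖ * (‖WithLp.toLp 2 (Λ *ᵥ aVec M (τ k))‖ * ‖h k‖) := by
        gcongr; exact norm_inner_le_norm _ _
    _ ≤ ‖c k‖ := by
        rw [hh k, mul_one]; exact mul_le_of_le_one_right (norm_nonneg _) (hΛ _ (hτ k))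

theorem Complex.mul_conj_div_norm (z : ℂ) : z * (starRingEnd ℂ) (z / ‖z‖) = ‖z‖ := by
  rcases eq_or_ne z 0 with rfl | hz
  · simp
  rw [map_div₀, conj_ofReal, mul_div_assoc', mul_conj, normSq_eq_norm_sq, ofReal_pow, sq,
    mul_div_cancel_right₀ _ (ofReal_ne_zero.mpr (norm_ne_zero_iff.mpr hz))]

theorem Complex.norm_div_norm_le_one (z : ℂ) : ‖z / ‖z‖‖ ≤ 1 := by
  rw [norm_div, norm_real, norm_norm]
  exact div_self_le_one _

theorem dual_certificate_optimality_general {K M J : ℕ}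
    (c : Fin J → ℂ) (h : Fin J → EuclideanSpace ℂ (Fin K)) (τ : Fin J → ℝ)
    (hh : ∀ j, ‖h j‖ = 1)
    (hτ : ∀ j, τ j ∈ Set.Ico (0 : ℝ) 1)
    (Xo : Matrix (Fin K) (Fin (4 * M + 1)) ℂ)
    (hXo : Xo = ∑ j, c j • atomMat (h j) (τ j))
    (lam : Fin (4 * M + 1) → ℂ) (b : Fin (4 * M + 1) → EuclideanSpace ℂ (Fin K))
    (q : ℝ → EuclideanSpace ℂ (Fin K))
    (hqdef : ∀ t : ℝ, q t = ∑ n : Fin (4 * M + 1),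
      (lam n * Complex.exp (Complex.I * (2 * π * ((n : ℤ) - 2 * M) * t))) • b n)
    (hq1 : ∀ j, q (τ j) = (c j / (‖c j‖ : ℂ)) • h j)
    (hq2 : ∀ t ∈ Set.Ico (0 : ℝ) 1, (∀ j, t ≠ τ j) → ‖q t‖ < 1)
    (y : Fin (4 * M + 1) → ℂ)
    (hy : ∀ n, y n = ∑ i, star (b n i) * Xo i n) :
    (∑ n, (starRingEnd ℂ) (lam n) * y n).re = ∑ j, ‖c j‖ ∧
    atomicNorm Xo = ∑ j, ‖c j‖ ∧
    ∀ X : Matrix (Fin K) (Fin (4 * M + 1)) ℂ,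
      (∀ n, (∑ i, star (b n i) * X i n) = y n) → atomicNorm Xo ≤ atomicNorm X := by
  set Λ : Matrix (Fin K) (Fin (4 * M + 1)) ℂ := Matrix.of fun i n => lam n * b n i
  have hq : ∀ t, q t = WithLp.toLp 2 (Λ *ᵥ aVec M t) := fun t => by
    ext i
    simp [hqdef, Λ, mulVec, dotProduct, aVec, mul_right_comm]
  have hmeas : ∀ X : Matrix (Fin K) (Fin (4 * M + 1)) ℂ,
      ∑ n, (starRingEnd ℂ) (lam n) * ∑ i, star (b n i) * X i n = trace (Λᴴ * X) := fun X => by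
    simp [trace, mul_apply, Λ, Finset.mul_sum, mul_assoc]
  have hfeas : ∀ t ∈ Set.Ico (0 : ℝ) 1, ‖WithLp.toLp 2 (Λ *ᵥ aVec M t)‖ ≤ 1 := by
    intro t ht
    rw [← hq]
    by_cases hsupp : ∃ j, t = τ j
    · obtain ⟨j, rfl⟩ := hsupp
      rw [hq1, norm_smul, hh, mul_one]
      exact (c j).norm_div_norm_le_one
    · exact (hq2 t ht fun j hj => hsupp ⟨j, hj⟩).le
  have hval : trace (Λᴴ * Xo) = ∑ j, ‖c j‖ := by
    simp only [hXo, trace_conjTranspose_mul_sum_atomMat, ← hq, hq1, inner_smul_left,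
      inner_self_eq_norm_sq_to_K, hh, RCLike.ofReal_one, one_pow, mul_one,
      Complex.mul_conj_div_norm, ofReal_sum]
  have hnorm : atomicNorm Xo = ∑ j, ‖c j‖ :=
    (atomicNorm_le_sum_norm c h τ hh hτ hXo).antisymm
      (by simpa [hval] using re_trace_conjTranspose_mul_le_atomicNorm Λ hfeas Xo)
  refine ⟨by simp only [hy, hmeas, hval, ofReal_re], hnorm, fun X hX => ?_⟩
  calc atomicNorm Xo = (trace (Λᴴ * Xo)).re := by rw [hnorm, hval, ofReal_re]
    _ = (trace (Λᴴ * X)).re := by simp only [← hmeas, hX, hy]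
    _ ≤ atomicNorm X := re_trace_conjTranspose_mul_le_atomicNorm Λ hfeas X

/-- Dual-certificate optimality: if there is a vector-valued trigonometric polynomial `q`
with `q(τ_j) = sign(c_j) h_j` and `‖q(τ)‖₂ < 1` off the support, then
`⟨λ, y⟩_ℝ = Σ_j |c_j| = ‖X_o‖_A` and `X_o` is optimal for atomic norm minimization. -/
theorem dual_certificate_optimality {K M J : ℕ}
    (c : Fin J → ℂ) (h : Fin J → EuclideanSpace ℂ (Fin K)) (τ : Fin J → ℝ)
    (hc : ∀ j, c j ≠ 0) (hh : ∀ j, ‖h j‖ = 1)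
    (hτ : ∀ j, τ j ∈ Set.Ico (0 : ℝ) 1) (hdist : Function.Injective τ)
    (Xo : Matrix (Fin K) (Fin (4 * M + 1)) ℂ)
    (hXo : Xo = ∑ j, c j • atomMat (h j) (τ j))
    (lam : Fin (4 * M + 1) → ℂ) (b : Fin (4 * M + 1) → EuclideanSpace ℂ (Fin K))
    (q : ℝ → EuclideanSpace ℂ (Fin K))
    (hqdef : ∀ t : ℝ, q t = ∑ n : Fin (4 * M + 1),
      (lam n * Complex.exp (Complex.I * (2 * π * ((n : ℤ) - 2 * M) * t))) • b n)
    (hq1 : ∀ j, q (τ j) = (c j / (‖c j‖ : ℂ)) • h j)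
    (hq2 : ∀ t ∈ Set.Ico (0 : ℝ) 1, (∀ j, t ≠ τ j) → ‖q t‖ < 1)
    (y : Fin (4 * M + 1) → ℂ)
    (hy : ∀ n, y n = ∑ i, star (b n i) * Xo i n) :
    (∑ n, (starRingEnd ℂ) (lam n) * y n).re = ∑ j, ‖c j‖ ∧
    atomicNorm Xo = ∑ j, ‖c j‖ ∧
    ∀ X : Matrix (Fin K) (Fin (4 * M + 1)) ℂ,
      (∀ n, (∑ i, star (b n i) * X i n) = y n) → atomicNorm Xo ≤ atomicNorm X :=
  dual_certificate_optimality_general c h τ hh hτ Xo hXo lam b q hqdef hq1 hq2 y hy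

end
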